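/- arXiv:2011.09706 — 3 statements merged into one kernel-verified Lean document; each statement's English description precedes it below -/
import Mathlib

section
/- With σ the softmax vector as above, for all x ∈ ℝ^d and h, θ ∈ (ℝ^d)^K, ‖σ(x,h) - σ(x,θ)‖ ≤ 2√K ‖x‖ ‖h - θ‖. -/
open scoped RealInnerProductSpace

set_option maxHeartbeats 1000000

private lemma key_exp (t : ℝ) (ht : 0 ≤ t) :
    2 * (Real.exp t - 1) ≤ t * (1 + Real.exp t) := by
  set f : ℝ → ℝ := fun s => s * Real.exp s + s - 2 * Real.exp s + 2 with hf
  have hderiv : ∀ s : ℝ, HasDerivAt f ((s - 1) * Real.exp s + 1) s := by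
    intro s
    have h1 : HasDerivAt (fun s : ℝ => s * Real.exp s)
        (1 * Real.exp s + s * Real.exp s) s :=
      (hasDerivAt_id s).mul (Real.hasDerivAt_exp s)
    have h2 : HasDerivAt (fun s : ℝ => 2 * Real.exp s) (2 * Real.exp s) s :=
      (Real.hasDerivAt_exp s).const_mul 2
    have : HasDerivAt f (1 * Real.exp s + s * Real.exp s + 1 - 2 * Real.exp s) s :=
      ((h1.add (hasDerivAt_id s)).sub h2).add_const 2
    convert this using 1
    ring
  have hnonneg : ∀ s : ℝ, 0 ≤ (s - 1) * Real.exp s + 1 := by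
    intro s
    have h1 : (1 : ℝ) - s ≤ Real.exp (-s) := by
      have := Real.add_one_le_exp (-s); linarith
    have h2 : (1 - s) * Real.exp s ≤ Real.exp (-s) * Real.exp s :=
      mul_le_mul_of_nonneg_right h1 (Real.exp_pos s).le
    rw [← Real.exp_add] at h2
    simp at h2
    nlinarith
  have hmono : Monotone f := by
    apply monotone_of_deriv_nonneg
    · exact fun s => (hderiv s).differentiableAt
    · intro s
      rw [(hderiv s).deriv]
      exact hnonneg s
  have h0 : f 0 = 0 := by simp [hf]
  have := hmono ht
  rw [h0] at this
  simp only [hf] at this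
  nlinarith

private lemma exp_sub_le' {u v : ℝ} (hvu : v ≤ u) :
    Real.exp u - Real.exp v ≤ (u - v) * (Real.exp u + Real.exp v) / 2 := by
  have hk := key_exp (u - v) (by linarith)
  have he : Real.exp u = Real.exp (u - v) * Real.exp v := by
    rw [← Real.exp_add]; ring_nf
  nlinarith [Real.exp_pos v, Real.exp_pos (u - v)]

private lemma abs_exp_sub_le (u v : ℝ) :
    |Real.exp u - Real.exp v| ≤ |u - v| * (Real.exp u + Real.exp v) / 2 := by
  rcases le_total v u with hvu | huv
  · rw [abs_of_nonneg (by linarith [Real.exp_le_exp.2 hvu]),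
      abs_of_nonneg (by linarith : (0:ℝ) ≤ u - v)]
    exact exp_sub_le' hvu
  · rw [abs_sub_comm, abs_of_nonneg (by linarith [Real.exp_le_exp.2 huv]),
      abs_sub_comm, abs_of_nonneg (by linarith : (0:ℝ) ≤ v - u)]
    have := exp_sub_le' huv
    linarith

/-- Global Lipschitz bound for the softmax vector:
`‖σ(x,h) - σ(x,θ)‖ ≤ 2√K ‖x‖ ‖h - θ‖`. -/
theorem softmax_lipschitz {d K : ℕ} (hK : 1 ≤ K)
    (x : EuclideanSpace ℝ (Fin d)) (h θ : Fin K → EuclideanSpace ℝ (Fin d))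
    (σ : (Fin K → EuclideanSpace ℝ (Fin d)) → Fin K → ℝ)
    (hσ : ∀ g k, σ g k = Real.exp ⟪g k, x⟫ / ∑ j, Real.exp ⟪g j, x⟫) :
    Real.sqrt (∑ k, (σ h k - σ θ k) ^ 2) ≤
      2 * Real.sqrt K * ‖x‖ * Real.sqrt (∑ j, ‖h j - θ j‖ ^ 2) := by
  have k0 : Fin K := ⟨0, hK⟩
  set a : Fin K → ℝ := fun k => ⟪h k, x⟫ with ha
  set b : Fin K → ℝ := fun k => ⟪θ k, x⟫ with hb
  set Sa : ℝ := ∑ j, Real.exp (a j) with hSa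
  set Sb : ℝ := ∑ j, Real.exp (b j) with hSb
  have hSa0 : 0 < Sa :=
    Finset.sum_pos (fun j _ => Real.exp_pos _) ⟨k0, Finset.mem_univ _⟩
  have hSb0 : 0 < Sb :=
    Finset.sum_pos (fun j _ => Real.exp_pos _) ⟨k0, Finset.mem_univ _⟩
  set H : ℝ := Real.sqrt (∑ j, ‖h j - θ j‖ ^ 2) with hH
  set δ : ℝ := ‖x‖ * H with hδ
  have hδ0 : 0 ≤ δ := mul_nonneg (norm_nonneg _) (Real.sqrt_nonneg _)
  have hab : ∀ j, |a j - b j| ≤ δ := by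
    intro j
    have h1 : a j - b j = ⟪h j - θ j, x⟫ := by
      simp [ha, hb, inner_sub_left]
    have h3 : ‖h j - θ j‖ ≤ H := by
      rw [hH, ← Real.sqrt_sq (norm_nonneg (h j - θ j))]
      exact Real.sqrt_le_sqrt
        (Finset.single_le_sum (f := fun i => ‖h i - θ i‖ ^ 2)
          (fun i _ => sq_nonneg _) (Finset.mem_univ j))
    calc |a j - b j| = |⟪h j - θ j, x⟫| := by rw [h1]
      _ ≤ ‖h j - θ j‖ * ‖x‖ := abs_real_inner_le_norm _ _
      _ ≤ H * ‖x‖ := mul_le_mul_of_nonneg_right h3 (norm_nonneg _)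
      _ = δ := by rw [hδ, mul_comm]
  -- per-coordinate bound
  have hcoord : ∀ k, |σ h k - σ θ k| ≤ δ * (σ h k + σ θ k) := by
    intro k
    have hph : σ h k = Real.exp (a k) / Sa := hσ h k
    have hpθ : σ θ k = Real.exp (b k) / Sb := hσ θ k
    have hnum : Real.exp (a k) * Sb - Real.exp (b k) * Sa =
        ∑ j, (Real.exp (a k + b j) - Real.exp (b k + a j)) := by
      rw [Finset.sum_sub_distrib, hSa, hSb, Finset.mul_sum, Finset.mul_sum]
      simp [Real.exp_add]
    have hnumle : |Real.exp (a k) * Sb - Real.exp (b k) * Sa| ≤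
        δ * (Real.exp (a k) * Sb + Real.exp (b k) * Sa) := by
      rw [hnum]
      calc |∑ j, (Real.exp (a k + b j) - Real.exp (b k + a j))|
          ≤ ∑ j, |Real.exp (a k + b j) - Real.exp (b k + a j)| :=
            Finset.abs_sum_le_sum_abs _ _
        _ ≤ ∑ j, δ * (Real.exp (a k + b j) + Real.exp (b k + a j)) := by
            apply Finset.sum_le_sum
            intro j _
            have h1 := abs_exp_sub_le (a k + b j) (b k + a j)
            have h2 : |a k + b j - (b k + a j)| ≤ 2 * δ := by
              have : a k + b j - (b k + a j) = (a k - b k) - (a j - b j) := by ring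
              rw [this]
              calc |(a k - b k) - (a j - b j)| ≤ |a k - b k| + |a j - b j| :=
                    abs_sub _ _
                _ ≤ 2 * δ := by linarith [hab k, hab j]
            have hpos : (0:ℝ) ≤ Real.exp (a k + b j) + Real.exp (b k + a j) := by
              positivity
            calc |Real.exp (a k + b j) - Real.exp (b k + a j)|
                ≤ |a k + b j - (b k + a j)| *
                    (Real.exp (a k + b j) + Real.exp (b k + a j)) / 2 := h1
              _ ≤ (2 * δ) * (Real.exp (a k + b j) + Real.exp (b k + a j)) / 2 := by
                  have := mul_le_mul_of_nonneg_right h2 hpos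
                  linarith
              _ = δ * (Real.exp (a k + b j) + Real.exp (b k + a j)) := by ring
        _ = δ * (Real.exp (a k) * Sb + Real.exp (b k) * Sa) := by
            have e1 : ∑ j, Real.exp (a k + b j) = Real.exp (a k) * Sb := by
              rw [hSb, Finset.mul_sum]
              simp [Real.exp_add]
            have e2 : ∑ j, Real.exp (b k + a j) = Real.exp (b k) * Sa := by
              rw [hSa, Finset.mul_sum]
              simp [Real.exp_add]
            rw [← Finset.mul_sum, Finset.sum_add_distrib, e1, e2]
    have hdiff : σ h k - σ θ k =
        (Real.exp (a k) * Sb - Real.exp (b k) * Sa) / (Sa * Sb) := by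
      rw [hph, hpθ, div_sub_div _ _ (ne_of_gt hSa0) (ne_of_gt hSb0), mul_comm Sa (Real.exp (b k))]
    rw [hdiff, abs_div, abs_of_pos (mul_pos hSa0 hSb0), div_le_iff₀ (mul_pos hSa0 hSb0)]
    calc |Real.exp (a k) * Sb - Real.exp (b k) * Sa|
        ≤ δ * (Real.exp (a k) * Sb + Real.exp (b k) * Sa) := hnumle
      _ = δ * (σ h k + σ θ k) * (Sa * Sb) := by
          rw [hph, hpθ]
          field_simp
  -- sums of softmax equal 1
  have hsum : ∀ g : Fin K → EuclideanSpace ℝ (Fin d), ∑ k, σ g k = 1 := by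
    intro g
    simp only [hσ g]
    rw [← Finset.sum_div, div_self]
    exact ne_of_gt (Finset.sum_pos (fun j _ => Real.exp_pos _) ⟨k0, Finset.mem_univ _⟩)
  have hσnn : ∀ g k, 0 ≤ σ g k := by
    intro g k
    rw [hσ g k]
    positivity
  -- sum of squares bound
  have hsq : ∑ k, (σ h k - σ θ k) ^ 2 ≤ (2 * δ) ^ 2 := by
    calc ∑ k, (σ h k - σ θ k) ^ 2
        ≤ ∑ k, (δ * (σ h k + σ θ k)) ^ 2 := by
          apply Finset.sum_le_sum
          intro k _
          have := hcoord k
          have h1 : |σ h k - σ θ k| ^ 2 ≤ (δ * (σ h k + σ θ k)) ^ 2 := by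
            apply pow_le_pow_left₀ (abs_nonneg _) this
          rwa [sq_abs] at h1
      _ = δ ^ 2 * ∑ k, (σ h k + σ θ k) ^ 2 := by
          rw [Finset.mul_sum]; congr 1; ext k; ring
      _ ≤ δ ^ 2 * (∑ k, (σ h k + σ θ k)) ^ 2 := by
          apply mul_le_mul_of_nonneg_left _ (sq_nonneg δ)
          exact Finset.sum_sq_le_sq_sum_of_nonneg
            (fun k _ => add_nonneg (hσnn h k) (hσnn θ k))
      _ = (2 * δ) ^ 2 := by
          rw [Finset.sum_add_distrib, hsum, hsum]
          ring
  have hsqrt : Real.sqrt (∑ k, (σ h k - σ θ k) ^ 2) ≤ 2 * δ := by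
    calc Real.sqrt (∑ k, (σ h k - σ θ k) ^ 2) ≤ Real.sqrt ((2 * δ) ^ 2) :=
        Real.sqrt_le_sqrt hsq
      _ = 2 * δ := Real.sqrt_sq (by linarith)
  have hK1 : (1:ℝ) ≤ Real.sqrt K := by
    rw [show (1:ℝ) = Real.sqrt 1 by simp]
    exact Real.sqrt_le_sqrt (by exact_mod_cast hK)
  calc Real.sqrt (∑ k, (σ h k - σ θ k) ^ 2) ≤ 2 * δ := hsqrt
    _ = 2 * 1 * ‖x‖ * H := by rw [hδ]; ring
    _ ≤ 2 * Real.sqrt K * ‖x‖ * H := by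
        have : (0:ℝ) ≤ ‖x‖ * H := mul_nonneg (norm_nonneg _) (Real.sqrt_nonneg _)
        nlinarith
end

section
/- Let (a_n) be a sequence of positive reals with a_n → 0 and ∑_n a_n = ∞, let m > 0, and let (u_n) be positive with u_n → u* > 0 (constant case). Then u_n^{-1} ∑_{k=1}^n (∏_{j=k+1}^n (1-a_j)^m) a_k u_k → 1/m as n → ∞, provided n·a_n → 0. -/
open Filter

/-- Recursion satisfied by the weighted sum. -/
lemma aux_rec (a u : ℕ → ℝ) (m : ℝ) (n : ℕ) :
    (∑ k ∈ Finset.Icc 1 (n + 1), (∏ j ∈ Finset.Icc (k + 1) (n + 1), (1 - a j) ^ m) * (a k * u k))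
      = (1 - a (n + 1)) ^ m *
          (∑ k ∈ Finset.Icc 1 n, (∏ j ∈ Finset.Icc (k + 1) n, (1 - a j) ^ m) * (a k * u k))
        + a (n + 1) * u (n + 1) := by
  rw [Finset.sum_Icc_succ_top (by omega : 1 ≤ n + 1)]
  rw [Finset.Icc_eq_empty (by omega : ¬ (n + 1 + 1 ≤ n + 1)), Finset.prod_empty, one_mul]
  congr 1
  rw [Finset.mul_sum]
  apply Finset.sum_congr rfl
  intro k hk
  have hk' : k ≤ n := (Finset.mem_Icc.1 hk).2
  rw [Finset.prod_Icc_succ_top (by omega : k + 1 ≤ n + 1)]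
  ring

/-- Convergence of a contractive recursion with small errors. -/
lemma aux_lim (y c b e : ℕ → ℝ)
    (hrec : ∀ n, y (n + 1) = c (n + 1) * y n + e (n + 1))
    (hc0 : ∀ᶠ n in atTop, 0 ≤ c n)
    (hcb : ∀ᶠ n in atTop, c n ≤ 1 - b n)
    (hdiv : ∀ N : ℕ, Tendsto (fun n => ∑ j ∈ Finset.Icc (N + 1) n, b j) atTop atTop)
    (he : ∀ δ : ℝ, 0 < δ → ∀ᶠ n in atTop, |e n| ≤ δ * b n) :
    Tendsto y atTop (nhds 0) := by
  rw [Metric.tendsto_atTop]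
  intro ε hε
  set δ := ε / 3 with hδdef
  have hδpos : 0 < δ := by positivity
  obtain ⟨N, hN⟩ := eventually_atTop.1 ((hc0.and hcb).and (he δ hδpos))
  have key : ∀ p : ℕ, |y (N + p)| ≤ δ + (∏ j ∈ Finset.Icc (N + 1) (N + p), c j) * |y N| := by
    intro p
    induction p with
    | zero =>
        simp only [Nat.add_zero, Finset.Icc_eq_empty (by omega : ¬ (N + 1 ≤ N)),
          Finset.prod_empty, one_mul]
        linarith [abs_nonneg (y N)]
    | succ p ih =>
        obtain ⟨⟨hc0', hcb'⟩, he'⟩ := hN (N + p + 1) (by omega)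
        have hQ0 : 0 ≤ ∏ j ∈ Finset.Icc (N + 1) (N + p), c j := by
          apply Finset.prod_nonneg
          intro j hj
          exact (hN j (by have := (Finset.mem_Icc.1 hj).1; omega)).1.1
        have hstep : |y (N + p + 1)| ≤ c (N + p + 1) * |y (N + p)| + δ * b (N + p + 1) := by
          rw [hrec (N + p)]
          calc |c (N + p + 1) * y (N + p) + e (N + p + 1)|
              ≤ |c (N + p + 1) * y (N + p)| + |e (N + p + 1)| := abs_add_le _ _
            _ ≤ c (N + p + 1) * |y (N + p)| + δ * b (N + p + 1) := by
                rw [abs_mul, abs_of_nonneg hc0']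
                exact add_le_add_right he' _
        have h2 : c (N + p + 1) * |y (N + p)| ≤
            c (N + p + 1) * (δ + (∏ j ∈ Finset.Icc (N + 1) (N + p), c j) * |y N|) :=
          mul_le_mul_of_nonneg_left ih hc0'
        show |y (N + p + 1)| ≤ δ + (∏ j ∈ Finset.Icc (N + 1) (N + p + 1), c j) * |y N|
        rw [Finset.prod_Icc_succ_top (by omega : N + 1 ≤ N + p + 1)]
        have hb' : c (N + p + 1) + b (N + p + 1) ≤ 1 := by linarith
        nlinarith [abs_nonneg (y N), hQ0, hδpos.le]
  -- the product tends to 0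
  have hQle : ∀ n, (∏ j ∈ Finset.Icc (N + 1) n, c j)
      ≤ Real.exp (-(∑ j ∈ Finset.Icc (N + 1) n, b j)) := by
    intro n
    calc (∏ j ∈ Finset.Icc (N + 1) n, c j)
        ≤ ∏ j ∈ Finset.Icc (N + 1) n, Real.exp (-(b j)) := by
          apply Finset.prod_le_prod
          · intro j hj
            exact (hN j (by have := (Finset.mem_Icc.1 hj).1; omega)).1.1
          · intro j hj
            have h1 := (hN j (by have := (Finset.mem_Icc.1 hj).1; omega)).1.2
            have h2 := Real.add_one_le_exp (-(b j))
            linarith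
      _ = Real.exp (∑ j ∈ Finset.Icc (N + 1) n, -(b j)) := (Real.exp_sum _ _).symm
      _ = Real.exp (-(∑ j ∈ Finset.Icc (N + 1) n, b j)) := by rw [Finset.sum_neg_distrib]
  have hQ0' : ∀ n, 0 ≤ ∏ j ∈ Finset.Icc (N + 1) n, c j := by
    intro n
    apply Finset.prod_nonneg
    intro j hj
    exact (hN j (by have := (Finset.mem_Icc.1 hj).1; omega)).1.1
  have hexp : Tendsto (fun n => Real.exp (-(∑ j ∈ Finset.Icc (N + 1) n, b j))) atTop (nhds 0) := by
    apply Real.tendsto_exp_atBot.comp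
    exact tendsto_neg_atBot_iff.mpr (hdiv N)
  have hQtend : Tendsto (fun n => ∏ j ∈ Finset.Icc (N + 1) n, c j) atTop (nhds 0) :=
    squeeze_zero hQ0' hQle hexp
  have hQy : Tendsto (fun n => (∏ j ∈ Finset.Icc (N + 1) n, c j) * |y N|) atTop (nhds 0) := by
    simpa using hQtend.mul_const |y N|
  have hev : ∀ᶠ n in atTop, (∏ j ∈ Finset.Icc (N + 1) n, c j) * |y N| < δ :=
    hQy.eventually (gt_mem_nhds hδpos)
  obtain ⟨M, hM⟩ := eventually_atTop.1 hev
  refine ⟨max N M, fun n hn => ?_⟩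
  obtain ⟨p, rfl⟩ : ∃ p, n = N + p := ⟨n - N, by omega⟩
  have h1 := key p
  have h2 := hM (N + p) (le_trans (le_max_right N M) hn)
  rw [Real.dist_eq, sub_zero]
  calc |y (N + p)| ≤ δ + (∏ j ∈ Finset.Icc (N + 1) (N + p), c j) * |y N| := h1
    _ < δ + δ := by linarith
    _ < ε := by rw [hδdef]; linarith

/-- Special case (ψ = 0) of the Mokkadem–Pelletier technical lemma:
`u_n⁻¹ ∑_{k=1}^n (∏_{j=k+1}^n (1-a_j)^m) a_k u_k → 1/m`. -/
theorem mokkadem_pelletier_special (a u : ℕ → ℝ) (m ustar : ℝ)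
    (hm : 0 < m) (hustar : 0 < ustar)
    (ha_pos : ∀ n, 0 < a n)
    (ha_lim : Tendsto a atTop (nhds 0))
    (ha_div : Tendsto (fun n => ∑ k ∈ Finset.range (n + 1), a k) atTop atTop)
    (hna : Tendsto (fun n : ℕ => (n : ℝ) * a n) atTop (nhds 0))
    (hu_pos : ∀ n, 0 < u n)
    (hu_lim : Tendsto u atTop (nhds ustar)) :
    Tendsto (fun n : ℕ =>
        (u n)⁻¹ * ∑ k ∈ Finset.Icc 1 n,
          (∏ j ∈ Finset.Icc (k + 1) n, (1 - a j) ^ m) * (a k * u k))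
      atTop (nhds (1 / m)) := by
  set L : ℝ := ustar / m with hLdef
  -- slope of (1-t)^m at 0 is -m, so (1 - (1-aₙ)^m)/aₙ → m
  have hderiv : HasDerivAt (fun t : ℝ => (1 - t) ^ m) (-m) 0 := by
    have h1 : HasDerivAt (fun t : ℝ => 1 - t) (-1) 0 := by
      simpa using (hasDerivAt_id (0:ℝ)).const_sub (1:ℝ)
    have h2 : HasDerivAt (fun s : ℝ => s ^ m) (m * (1:ℝ) ^ (m - 1)) ((fun t : ℝ => 1 - t) 0) := by
      simpa using Real.hasDerivAt_rpow_const (x := (1:ℝ)) (p := m) (Or.inl one_ne_zero)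
    have h3 := h2.comp 0 h1
    exact h3.congr_deriv (by simp [Real.one_rpow])
  have hslope := hasDerivAt_iff_tendsto_slope.1 hderiv
  have ha' : Tendsto a atTop (nhdsWithin (0:ℝ) {(0:ℝ)}ᶜ) := by
    apply tendsto_nhdsWithin_of_tendsto_nhds_of_eventually_within _ ha_lim
    exact Eventually.of_forall (fun n => (ha_pos n).ne')
  have hg : Tendsto (fun n => (1 - (1 - a n) ^ m) / a n) atTop (nhds m) := by
    have h1 := (hslope.comp ha').neg
    rw [neg_neg] at h1
    apply h1.congr
    intro n
    simp only [Function.comp_apply]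
    rw [slope_def_field]
    simp only [sub_zero, Real.one_rpow]
    rw [← neg_div, neg_sub]
  -- the error term
  have hw : Tendsto (fun n => u n - ((1 - (1 - a n) ^ m) / a n) * L) atTop (nhds 0) := by
    have h1 := hu_lim.sub (hg.mul_const L)
    have h2 : ustar - m * L = 0 := by rw [hLdef]; field_simp; ring
    rwa [h2] at h1
  have hg2 : ∀ᶠ n in atTop, m / 2 < (1 - (1 - a n) ^ m) / a n :=
    hg.eventually (lt_mem_nhds (by linarith))
  have ha1 : ∀ᶠ n in atTop, a n < 1 := ha_lim.eventually (gt_mem_nhds one_pos)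
  -- apply the aux lemma
  have hy : Tendsto (fun n => (∑ k ∈ Finset.Icc 1 n,
      (∏ j ∈ Finset.Icc (k + 1) n, (1 - a j) ^ m) * (a k * u k)) - L) atTop (nhds 0) := by
    apply aux_lim _ (fun n => (1 - a n) ^ m) (fun n => m / 2 * a n)
      (fun n => a n * u n - (1 - (1 - a n) ^ m) * L)
    · intro n
      rw [aux_rec a u m n]
      ring
    · filter_upwards [ha1] with n hn
      exact (Real.rpow_pos_of_pos (by linarith) m).le
    · filter_upwards [hg2] with n hn
      have := (lt_div_iff₀ (ha_pos n)).1 hn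
      linarith
    · intro N
      have h2 : Tendsto (fun n => ∑ j ∈ Finset.Icc (N + 1) n, a j) atTop atTop := by
        apply Tendsto.congr' _ (tendsto_atTop_add_const_right atTop
          (-(∑ k ∈ Finset.range (N + 1), a k)) ha_div)
        filter_upwards [eventually_ge_atTop N] with n hn
        rw [← Finset.Ico_add_one_right_eq_Icc, Finset.sum_Ico_eq_sub _ (by omega)]
        ring
      have h3 := h2.const_mul_atTop (by linarith : (0:ℝ) < m / 2)
      apply h3.congr
      intro n
      rw [Finset.mul_sum]
    · intro δ hδ
      have hwev : ∀ᶠ n in atTop, |u n - ((1 - (1 - a n) ^ m) / a n) * L| < δ * (m / 2) := by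
        have h1 := Metric.tendsto_nhds.1 hw (δ * (m / 2)) (by positivity)
        simpa [Real.dist_eq] using h1
      filter_upwards [hwev] with n hn
      have hne : a n ≠ 0 := (ha_pos n).ne'
      have heq : a n * u n - (1 - (1 - a n) ^ m) * L
          = a n * (u n - ((1 - (1 - a n) ^ m) / a n) * L) := by
        field_simp
      rw [heq, abs_mul, abs_of_pos (ha_pos n)]
      calc a n * |u n - ((1 - (1 - a n) ^ m) / a n) * L| ≤ a n * (δ * (m / 2)) := by
            exact mul_le_mul_of_nonneg_left hn.le (ha_pos n).le
        _ = δ * (m / 2 * a n) := by ring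
  have hx : Tendsto (fun n => ∑ k ∈ Finset.Icc 1 n,
      (∏ j ∈ Finset.Icc (k + 1) n, (1 - a j) ^ m) * (a k * u k)) atTop (nhds L) := by
    have := hy.add_const L
    simpa using this
  have hfin := (hu_lim.inv₀ hustar.ne').mul hx
  have hval : ustar⁻¹ * L = 1 / m := by
    rw [hLdef]
    field_simp
  rwa [hval] at hfin
end

section
/- Let (a_n) be positive with a_n → 0, ∑ a_n = ∞, n·a_n → ψ ≥ 0, let m > 0, and let (α_n) be a bounded sequence with α_n → 0. If additionally for every n the partial products β_{n,k} = ∏_{j=k+1}^n (1-a_j)^m are nonnegative, then ∑_{k=1}^n β_{n,k} a_k α_k → 0 as n → ∞, provided m + 0·ψ > 0 and ∑_{k=1}^n β_{n,k} a_k stays bounded. -/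
open Filter

private lemma beta_tendsto (a : ℕ → ℝ) (m : ℝ) (hm : 0 < m)
    (ha_pos : ∀ n, 0 < a n)
    (ha_lim : Tendsto a atTop (nhds 0))
    (ha_div : Tendsto (fun n => ∑ k ∈ Finset.range (n + 1), a k) atTop atTop)
    (k : ℕ) :
    Tendsto (fun n => ∏ j ∈ Finset.Icc (k + 1) n, (1 - a j) ^ m) atTop (nhds 0) := by
  obtain ⟨K0, hK0⟩ := Metric.tendsto_atTop.mp ha_lim (1/2) (by norm_num)
  set K := max k K0 with hKdef
  have hsmall : ∀ j, K < j → a j < 1/2 := by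
    intro j hj
    have := hK0 j (le_trans (le_max_right _ _) hj.le)
    rwa [Real.dist_eq, sub_zero, abs_of_pos (ha_pos j)] at this
  set P : ℕ → ℝ := fun n => ∏ j ∈ Finset.Ioc K n, (1 - a j) ^ m with hPdef
  have hPnonneg : ∀ n, 0 ≤ P n := by
    intro n
    apply Finset.prod_nonneg
    intro j hj
    have h1 : 0 < 1 - a j := by
      have := hsmall j (Finset.mem_Ioc.mp hj).1
      linarith
    exact Real.rpow_nonneg h1.le m
  have hPle : ∀ n, P n ≤ Real.exp (∑ j ∈ Finset.Ioc K n, -(m * a j)) := by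
    intro n
    rw [Real.exp_sum]
    apply Finset.prod_le_prod
    · intro j hj
      have h1 : 0 < 1 - a j := by
        have := hsmall j (Finset.mem_Ioc.mp hj).1
        linarith
      exact Real.rpow_nonneg h1.le m
    · intro j hj
      have h1 : 0 < 1 - a j := by
        have := hsmall j (Finset.mem_Ioc.mp hj).1
        linarith
      rw [Real.rpow_def_of_pos h1]
      apply Real.exp_le_exp.mpr
      have hlog : Real.log (1 - a j) ≤ -(a j) := by
        have := Real.log_le_sub_one_of_pos h1
        linarith
      calc Real.log (1 - a j) * m ≤ -(a j) * m :=
            mul_le_mul_of_nonneg_right hlog hm.le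
        _ = -(m * a j) := by ring
  have hsumIoc : Tendsto (fun n => ∑ j ∈ Finset.Ioc K n, a j) atTop atTop := by
    have heq : ∀ n, K ≤ n → ∑ j ∈ Finset.Ioc K n, a j
        = (∑ j ∈ Finset.range (n + 1), a j) - ∑ j ∈ Finset.range (K + 1), a j := by
      intro n hn
      rw [show Finset.Ioc K n = Finset.Ico (K + 1) (n + 1) by
        rw [Finset.Ico_add_one_add_one_eq_Ioc]]
      exact Finset.sum_Ico_eq_sub _ (Nat.succ_le_succ hn)
    have h2 : Tendsto (fun n => (∑ j ∈ Finset.range (n + 1), a j)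
        - ∑ j ∈ Finset.range (K + 1), a j) atTop atTop :=
      tendsto_atTop_add_const_right _ _ ha_div
    exact h2.congr' (by filter_upwards [eventually_ge_atTop K] with n hn using (heq n hn).symm)
  have hexp0 : Tendsto (fun n => Real.exp (∑ j ∈ Finset.Ioc K n, -(m * a j))) atTop (nhds 0) := by
    apply Real.tendsto_exp_atBot.comp
    have hmul : Tendsto (fun n => m * ∑ j ∈ Finset.Ioc K n, a j) atTop atTop :=
      hsumIoc.const_mul_atTop hm
    have hneg : Tendsto (fun n => -(m * ∑ j ∈ Finset.Ioc K n, a j)) atTop atBot :=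
      tendsto_neg_atTop_atBot.comp hmul
    refine hneg.congr fun n => ?_
    rw [Finset.mul_sum, ← Finset.sum_neg_distrib]
  have hP0 : Tendsto P atTop (nhds 0) :=
    tendsto_of_tendsto_of_tendsto_of_le_of_le tendsto_const_nhds hexp0 hPnonneg hPle
  have hC : Tendsto (fun n => (∏ j ∈ Finset.Ioc k K, (1 - a j) ^ m) * P n) atTop (nhds 0) := by
    have := hP0.const_mul (∏ j ∈ Finset.Ioc k K, (1 - a j) ^ m)
    simpa using this
  refine hC.congr' ?_
  filter_upwards [eventually_ge_atTop K] with n hn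
  rw [Finset.Icc_add_one_left_eq_Ioc]
  exact Finset.prod_Ioc_consecutive _ (le_max_left k K0) hn

/-- Third assertion of the Mokkadem–Pelletier technical lemma: weighted
averages with exponentially decaying weights of a sequence tending to `0`
converge to `0`. -/
theorem mokkadem_pelletier_third (a α : ℕ → ℝ) (m ψ Cb : ℝ)
    (hm : 0 < m) (hψ : 0 ≤ ψ)
    (ha_pos : ∀ n, 0 < a n)
    (ha_lim : Tendsto a atTop (nhds 0))
    (ha_div : Tendsto (fun n => ∑ k ∈ Finset.range (n + 1), a k) atTop atTop)
    (hna : Tendsto (fun n : ℕ => (n : ℝ) * a n) atTop (nhds ψ))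
    (hα_bdd : ∀ n, |α n| ≤ Cb)
    (hα_lim : Tendsto α atTop (nhds 0))
    (hβ_nonneg : ∀ n k, 0 ≤ ∏ j ∈ Finset.Icc (k + 1) n, (1 - a j) ^ m)
    (hsum_bdd : ∃ M, ∀ n : ℕ,
      ∑ k ∈ Finset.Icc 1 n, (∏ j ∈ Finset.Icc (k + 1) n, (1 - a j) ^ m) * a k ≤ M) :
    Tendsto (fun n : ℕ =>
        ∑ k ∈ Finset.Icc 1 n,
          (∏ j ∈ Finset.Icc (k + 1) n, (1 - a j) ^ m) * (a k * α k))
      atTop (nhds 0) := by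
  obtain ⟨M, hM⟩ := hsum_bdd
  have hM0 : 0 ≤ M := le_trans (by simp) (hM 0)
  rw [Metric.tendsto_atTop]
  intro ε hε
  set ε' := ε / (2 * (M + 1)) with hε'def
  have hε' : 0 < ε' := div_pos hε (by positivity)
  obtain ⟨N1, hN1⟩ := Metric.tendsto_atTop.mp hα_lim ε' hε'
  have hhead : Tendsto (fun n => ∑ k ∈ Finset.Ioc 0 N1,
      (∏ j ∈ Finset.Icc (k + 1) n, (1 - a j) ^ m) * (a k * α k)) atTop (nhds 0) := by
    have := tendsto_finset_sum (Finset.Ioc 0 N1)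
      (fun k _ => (beta_tendsto a m hm ha_pos ha_lim ha_div k).mul_const (a k * α k))
    simpa using this
  obtain ⟨N2, hN2⟩ := Metric.tendsto_atTop.mp hhead (ε / 2) (half_pos hε)
  refine ⟨max N1 N2, fun n hn => ?_⟩
  have hn1 : N1 ≤ n := le_trans (le_max_left _ _) hn
  have hn2 : N2 ≤ n := le_trans (le_max_right _ _) hn
  rw [Real.dist_eq, sub_zero]
  have hsplit : ∑ k ∈ Finset.Icc 1 n,
      (∏ j ∈ Finset.Icc (k + 1) n, (1 - a j) ^ m) * (a k * α k)
      = (∑ k ∈ Finset.Ioc 0 N1, (∏ j ∈ Finset.Icc (k + 1) n, (1 - a j) ^ m) * (a k * α k))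
        + ∑ k ∈ Finset.Ioc N1 n, (∏ j ∈ Finset.Icc (k + 1) n, (1 - a j) ^ m) * (a k * α k) := by
    rw [show Finset.Icc 1 n = Finset.Ioc 0 n from Finset.Icc_add_one_left_eq_Ioc 0 n]
    exact (Finset.sum_Ioc_consecutive _ (Nat.zero_le N1) hn1).symm
  rw [hsplit]
  have hheadlt : |∑ k ∈ Finset.Ioc 0 N1,
      (∏ j ∈ Finset.Icc (k + 1) n, (1 - a j) ^ m) * (a k * α k)| < ε / 2 := by
    have := hN2 n hn2
    rwa [Real.dist_eq, sub_zero] at this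
  have htail : |∑ k ∈ Finset.Ioc N1 n,
      (∏ j ∈ Finset.Icc (k + 1) n, (1 - a j) ^ m) * (a k * α k)| < ε / 2 := by
    have h1 : |∑ k ∈ Finset.Ioc N1 n,
        (∏ j ∈ Finset.Icc (k + 1) n, (1 - a j) ^ m) * (a k * α k)|
        ≤ ∑ k ∈ Finset.Ioc N1 n,
        (∏ j ∈ Finset.Icc (k + 1) n, (1 - a j) ^ m) * a k * ε' := by
      refine (Finset.abs_sum_le_sum_abs _ _).trans (Finset.sum_le_sum fun k hk => ?_)
      have hk1 : N1 ≤ k := (Finset.mem_Ioc.mp hk).1.le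
      have hαk : |α k| ≤ ε' := by
        have := hN1 k hk1
        rw [Real.dist_eq, sub_zero] at this
        exact this.le
      rw [abs_mul, abs_mul, abs_of_nonneg (hβ_nonneg n k), abs_of_pos (ha_pos k), mul_assoc]
      exact mul_le_mul_of_nonneg_left
        (mul_le_mul_of_nonneg_left hαk (ha_pos k).le) (hβ_nonneg n k)
    have h2 : ∑ k ∈ Finset.Ioc N1 n,
        (∏ j ∈ Finset.Icc (k + 1) n, (1 - a j) ^ m) * a k * ε'
        = (∑ k ∈ Finset.Ioc N1 n, (∏ j ∈ Finset.Icc (k + 1) n, (1 - a j) ^ m) * a k) * ε' :=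
      (Finset.sum_mul _ _ _).symm
    have h3 : ∑ k ∈ Finset.Ioc N1 n, (∏ j ∈ Finset.Icc (k + 1) n, (1 - a j) ^ m) * a k
        ≤ ∑ k ∈ Finset.Icc 1 n, (∏ j ∈ Finset.Icc (k + 1) n, (1 - a j) ^ m) * a k := by
      apply Finset.sum_le_sum_of_subset_of_nonneg
      · intro k hk
        obtain ⟨h4, h5⟩ := Finset.mem_Ioc.mp hk
        exact Finset.mem_Icc.mpr ⟨Nat.one_le_iff_ne_zero.mpr
          (Nat.lt_of_le_of_lt (Nat.zero_le N1) h4).ne', h5⟩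
      · intro k _ _
        exact mul_nonneg (hβ_nonneg n k) (ha_pos k).le
    have h4 : (∑ k ∈ Finset.Ioc N1 n, (∏ j ∈ Finset.Icc (k + 1) n, (1 - a j) ^ m) * a k) * ε'
        ≤ M * ε' := mul_le_mul_of_nonneg_right (h3.trans (hM n)) hε'.le
    have h5 : M * ε' < ε / 2 := by
      have : ε' * (M + 1) = ε / 2 := by
        rw [hε'def]; field_simp
      nlinarith
    linarith [h1, h2 ▸ h1]
  calc |(∑ k ∈ Finset.Ioc 0 N1, (∏ j ∈ Finset.Icc (k + 1) n, (1 - a j) ^ m) * (a k * α k))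
        + ∑ k ∈ Finset.Ioc N1 n, (∏ j ∈ Finset.Icc (k + 1) n, (1 - a j) ^ m) * (a k * α k)|
      ≤ _ + _ := abs_add_le _ _
    _ < ε / 2 + ε / 2 := add_lt_add hheadlt htail
    _ = ε := add_halves ε
end
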